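/- For n = 6, the extreme point x of S^6 on vertices {1,...,6} with x_e = 1 on edges {1,2}, {3,4}, {5,6} and x_e = 1/2 on edges {1,3}, {1,5}, {2,4}, {2,6}, {3,5}, {4,6} (and 0 elsewhere) is a half-integral extreme point of the subtour polytope that is not a convex combination of Hamiltonian cycle incidence vectors restricted to its support, and there exists a metric cost c for which the ratio of the optimal tour length to c^T x equals 10/9. -/

import Mathlib

open Finset
open scoped Classical

noncomputable section

/-- Edge set of the complete graph `K_n` as non-diagonal elements of `Sym2 (Fin n)`. -/
def edgeSet (n : ℕ) : Finset (Sym2 (Fin n)) :=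
  Finset.univ.filter (fun e => ¬ e.IsDiag)

/-- The cut `δ(S)`: edges with exactly one endpoint in `S`. -/
def cut {n : ℕ} (S : Finset (Fin n)) : Finset (Sym2 (Fin n)) :=
  Finset.univ.filter (fun e => ¬ e.IsDiag ∧ ∃ u v : Fin n, e = s(u, v) ∧ u ∈ S ∧ v ∉ S)

/-- Membership in the subtour polytope `S^n`. -/
def InSubtour (n : ℕ) (x : Sym2 (Fin n) → ℝ) : Prop :=
  (∀ e ∈ edgeSet n, 0 ≤ x e ∧ x e ≤ 1) ∧
  (∀ v : Fin n, ∑ e ∈ cut ({v} : Finset (Fin n)), x e = 2) ∧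
  (∀ S : Finset (Fin n), 2 ≤ S.card → S.card ≤ n - 2 → 2 ≤ ∑ e ∈ cut S, x e)

/-- Extreme point of the subtour polytope: not a proper convex combination
(equivalently, not the midpoint of two distinct points of `S^n`). -/
def IsExtremePt (n : ℕ) (x : Sym2 (Fin n) → ℝ) : Prop :=
  InSubtour n x ∧
  ∀ y z : Sym2 (Fin n) → ℝ, InSubtour n y → InSubtour n z →
    (∀ e ∈ edgeSet n, x e = (y e + z e) / 2) → ∀ e ∈ edgeSet n, y e = z e

/-- Support edges of `x`: edges with strictly positive value. -/
def supportEdges {n : ℕ} (x : Sym2 (Fin n) → ℝ) : Finset (Sym2 (Fin n)) :=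
  (edgeSet n).filter (fun e => 0 < x e)

/-- Degree of a vertex in the support graph of `x`. -/
def supDeg {n : ℕ} (x : Sym2 (Fin n) → ℝ) (v : Fin n) : ℕ :=
  (cut ({v} : Finset (Fin n)) ∩ supportEdges x).card

/-- `x` is the incidence vector of a Hamiltonian cycle of `K_n`. -/
def IsHamCycle (n : ℕ) (x : Sym2 (Fin n) → ℝ) : Prop :=
  ∃ σ : Equiv.Perm (Fin n), σ.IsCycle ∧ σ.support = Finset.univ ∧
    ∀ e ∈ edgeSet n, x e = if (∃ v : Fin n, e = s(v, σ v)) then 1 else 0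

/-- Cost `c^T x` over the edges of `K_n`. -/
def cost {n : ℕ} (c x : Sym2 (Fin n) → ℝ) : ℝ := ∑ e ∈ edgeSet n, c e * x e

/-- `c` is a metric cost function: nonnegative (symmetry is built into `Sym2`)
and satisfying the triangle inequality. -/
def IsMetricCost (n : ℕ) (c : Sym2 (Fin n) → ℝ) : Prop :=
  (∀ e, 0 ≤ c e) ∧ ∀ i j k : Fin n, c s(i, k) ≤ c s(i, j) + c s(j, k)

/-- The extreme point on 6 vertices supported on the triangular prism:
value 1 on the matching edges {0,1}, {2,3}, {4,5} and value 1/2 on the two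
triangles {0,2,4} and {1,3,5}. -/
def xPrism : Sym2 (Fin 6) → ℝ := fun e =>
  if e = s((0 : Fin 6), 1) ∨ e = s((2 : Fin 6), 3) ∨ e = s((4 : Fin 6), 5) then 1
  else if e = s((0 : Fin 6), 2) ∨ e = s((0 : Fin 6), 4) ∨ e = s((2 : Fin 6), 4) ∨
          e = s((1 : Fin 6), 3) ∨ e = s((1 : Fin 6), 5) ∨ e = s((3 : Fin 6), 5) then 1 / 2
  else 0

/-!
The fractional edges of the prism point form two triangles, which are odd cycles, so the
degree equations together with the values forced at 0 and 1 determine the point: it is extreme.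

A tour crosses the cut `δ({0, 2, 4})`, made of the three matching edges and the six non-edges of
the prism, an even number of times. A tour inside the support therefore uses at most two
matching edges, whereas `x` puts total weight 3 on them, so `x` is no convex combination of such
tours. With costs 1 on the matching, 2 on the triangles and 3 elsewhere (a metric), `c^T x = 9`,
while a tour costs `12 - (matching edges used) + (non-edges used) ≥ 10` by the same parity, with
equality for the tour `0-1-3-5-4-2`.
-/

section

variable {n : ℕ}

lemma mk_mem_edgeSet {u w : Fin n} : s(u, w) ∈ edgeSet n ↔ u ≠ w := by
  simp [edgeSet]

lemma mk_mem_cut {S : Finset (Fin n)} {u w : Fin n} :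
    s(u, w) ∈ cut S ↔ u ∈ S ∧ w ∉ S ∨ w ∈ S ∧ u ∉ S := by
  simp only [cut, mem_filter, mem_univ, true_and, Sym2.mk_isDiag_iff, Sym2.eq_iff]
  constructor
  · rintro ⟨-, a, b, ⟨rfl, rfl⟩ | ⟨rfl, rfl⟩, ha, hb⟩
    exacts [Or.inl ⟨ha, hb⟩, Or.inr ⟨ha, hb⟩]
  · rintro (⟨hu, hw⟩ | ⟨hw, hu⟩)
    · exact ⟨fun h => hw (h ▸ hu), u, w, Or.inl ⟨rfl, rfl⟩, hu, hw⟩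
    · exact ⟨fun h => hu (h ▸ hw), w, u, Or.inr ⟨rfl, rfl⟩, hw, hu⟩

lemma cut_subset_edgeSet (S : Finset (Fin n)) : cut S ⊆ edgeSet n := fun e he => by
  simp only [cut, edgeSet, mem_filter] at he ⊢
  exact ⟨he.1, he.2.1⟩

def cycleIncidence (σ : Equiv.Perm (Fin n)) : Sym2 (Fin n) → ℝ :=
  fun e => if ∃ v, e = s(v, σ v) then 1 else 0

lemma card_filter_mk_apply_mem_cut (σ : Equiv.Perm (Fin n)) (S : Finset (Fin n)) :
    #{v | s(v, σ v) ∈ cut S} = 2 * #{v | v ∈ S ∧ σ v ∉ S} := by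
  have hsplit : #{v | s(v, σ v) ∈ cut S} = #{v | v ∈ S ∧ σ v ∉ S} + #{v | σ v ∈ S ∧ v ∉ S} := by
    simp only [mk_mem_cut, filter_or]
    exact card_union_of_disjoint (disjoint_filter.mpr fun v _ h h' => h'.2 h.1)
  have hpre : #{v | σ v ∈ S} = #{v | v ∈ S} := by
    have : univ.filter (σ · ∈ S) = (univ.filter (· ∈ S)).map σ.symm.toEmbedding := by
      ext v
      simp [mem_map_equiv]
    rw [this, card_map]
  have hS := card_filter_add_card_filter_not (s := univ.filter (· ∈ S)) (fun v => σ v ∈ S)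
  have hσS := card_filter_add_card_filter_not (s := univ.filter (σ · ∈ S)) (· ∈ S)
  simp only [filter_filter] at hS hσS
  have hcomm : #{v | σ v ∈ S ∧ v ∈ S} = #{v | v ∈ S ∧ σ v ∈ S} := by
    simp only [and_comm]
  omega

section CycleEdges

variable {σ : Equiv.Perm (Fin n)}

lemma injective_mk_apply (hσ : ∀ v, σ (σ v) ≠ v) : Function.Injective fun v => s(v, σ v) := by
  intro a b hab
  rcases Sym2.eq_iff.mp hab with ⟨h, -⟩ | ⟨rfl, h⟩
  · exact h
  · exact absurd h (hσ b)

variable {t : Sym2 (Fin n) → ℝ}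

lemma cost_eq_sum_mk_apply (hσ : ∀ v, σ (σ v) ≠ v)
    (ht : ∀ e ∈ edgeSet n, t e = cycleIncidence σ e) (c : Sym2 (Fin n) → ℝ) :
    cost c t = ∑ v, c s(v, σ v) := by
  have hedges :
      (edgeSet n).filter (fun e => ∃ v, e = s(v, σ v)) = univ.image fun v => s(v, σ v) := by
    ext e
    simp only [mem_filter, mem_image, mem_univ, true_and]
    constructor
    · rintro ⟨-, v, rfl⟩
      exact ⟨v, rfl⟩
    · rintro ⟨v, rfl⟩
      exact ⟨mk_mem_edgeSet.mpr fun h => hσ v (by rw [← h, ← h]), v, rfl⟩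
  calc cost c t = ∑ e ∈ edgeSet n, if ∃ v, e = s(v, σ v) then c e else 0 := by
        refine sum_congr rfl fun e he => ?_
        rw [ht e he, cycleIncidence]
        split_ifs <;> simp
    _ = ∑ v, c s(v, σ v) := by
        rw [← sum_filter, hedges, sum_image fun a _ b _ h => injective_mk_apply hσ h]

lemma sum_eq_card_filter_mk_apply (hσ : ∀ v, σ (σ v) ≠ v)
    (ht : ∀ e ∈ edgeSet n, t e = cycleIncidence σ e) {F : Finset (Sym2 (Fin n))}
    (hF : F ⊆ edgeSet n) : ∑ e ∈ F, t e = #{v | s(v, σ v) ∈ F} := by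
  have h := cost_eq_sum_mk_apply hσ ht fun e => if e ∈ F then 1 else 0
  simp only [cost, ite_mul, one_mul, zero_mul, ← sum_filter, filter_mem_eq_inter,
    inter_eq_right.mpr hF] at h
  rw [h, sum_const, nsmul_one]

end CycleEdges

lemma IsHamCycle.exists_perm {t : Sym2 (Fin n) → ℝ} (hn : 3 ≤ n) (ht : IsHamCycle n t) :
    ∃ σ : Equiv.Perm (Fin n), (∀ v, σ (σ v) ≠ v) ∧ ∀ e ∈ edgeSet n, t e = cycleIncidence σ e := by
  obtain ⟨σ, hcyc, hsupp, ht⟩ := ht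
  refine ⟨σ, fun v hv => ?_, ht⟩
  have hσv : σ v ≠ v := Equiv.Perm.mem_support.mp (hsupp ▸ mem_univ v)
  have hsq : σ ^ 2 = 1 := (hcyc.pow_eq_one_iff' hσv).mpr (by simpa [sq] using hv)
  have hdvd : n ∣ 2 := by
    simpa [hcyc.orderOf, hsupp] using orderOf_dvd_of_pow_eq_one hsq
  have := Nat.le_of_dvd two_pos hdvd
  omega

end

namespace Prism

def matching : Finset (Sym2 (Fin 6)) := {s(0, 1), s(2, 3), s(4, 5)}

def triangles : Finset (Sym2 (Fin 6)) := univ.image fun v => s(v, v + 2)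

def nonEdges : Finset (Sym2 (Fin 6)) := {s(0, 3), s(1, 4), s(2, 5), s(1, 2), s(3, 4), s(0, 5)}

/-- Twice `xPrism`, so that its sums over cuts can be decided in `ℕ`. -/
def weight (e : Sym2 (Fin 6)) : ℕ := if e ∈ matching then 2 else if e ∈ triangles then 1 else 0

def metric (e : Sym2 (Fin 6)) : ℕ :=
  if e.IsDiag then 0 else if e ∈ matching then 1 else if e ∈ nonEdges then 3 else 2

def tour : Equiv.Perm (Fin 6) := [0, 1, 3, 5, 4, 2].formPerm

lemma xPrism_eq_weight_div_two (e : Sym2 (Fin 6)) : xPrism e = weight e / 2 := by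
  have hM : ∀ e : Sym2 (Fin 6), (e = s(0, 1) ∨ e = s(2, 3) ∨ e = s(4, 5)) ↔ e ∈ matching := by
    decide
  have hT : ∀ e : Sym2 (Fin 6), (e = s(0, 2) ∨ e = s(0, 4) ∨ e = s(2, 4) ∨ e = s(1, 3) ∨
      e = s(1, 5) ∨ e = s(3, 5)) ↔ e ∈ triangles := by
    decide
  simp only [xPrism, weight, hM, hT]
  split_ifs <;> norm_num

lemma sum_xPrism (F : Finset (Sym2 (Fin 6))) :
    ∑ e ∈ F, xPrism e = (∑ e ∈ F, weight e : ℕ) / 2 := by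
  simp only [xPrism_eq_weight_div_two, Nat.cast_sum, sum_div]

lemma inSubtour_xPrism : InSubtour 6 xPrism := by
  refine ⟨fun e _ => ?_, fun v => ?_, fun S hS₂ hS₄ => ?_⟩
  · rw [xPrism_eq_weight_div_two]
    unfold weight
    split_ifs <;> norm_num
  · have : ∀ v : Fin 6, ∑ e ∈ cut {v}, weight e = 4 := by decide
    rw [sum_xPrism, this v]
    norm_num
  · have : ∀ S : Finset (Fin 6), 2 ≤ #S → #S ≤ 4 → 4 ≤ ∑ e ∈ cut S, weight e := by decide
    rw [sum_xPrism, le_div_iff₀ two_pos]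
    exact_mod_cast this S hS₂ hS₄

lemma eq_zero_of_sum_cut_singleton_eq_zero (f : Sym2 (Fin 6) → ℝ)
    (hf : ∀ e ∈ edgeSet 6, e ∉ triangles → f e = 0) (hsum : ∀ v, ∑ e ∈ cut {v}, f e = 0) :
    ∀ e ∈ edgeSet 6, f e = 0 := by
  have hcut : ∀ v : Fin 6, s(v, v + 2) ≠ s(v + 4, v + 4 + 2) ∧ s(v, v + 2) ∈ cut {v} ∧
      s(v + 4, v + 4 + 2) ∈ cut {v} ∧
      ∀ e ∈ cut {v}, e ≠ s(v, v + 2) ∧ e ≠ s(v + 4, v + 4 + 2) → e ∉ triangles := by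
    decide
  have hpair : ∀ v, f s(v, v + 2) + f s(v + 4, v + 4 + 2) = 0 := fun v => by
    obtain ⟨hne, h₁, h₂, hrest⟩ := hcut v
    rw [← hsum v, sum_eq_add _ _ hne
      (fun e he hne' => hf e (cut_subset_edgeSet _ he) (hrest e he hne'))
      (absurd h₁) (absurd h₂)]
  have hshift : ∀ v : Fin 6, v + 4 + 4 = v + 2 ∧ v + 2 + 4 = v := by decide
  have htri : ∀ v, f s(v, v + 2) = 0 := fun v => by
    have h₁ := hpair v
    have h₂ := hpair (v + 4)
    have h₃ := hpair (v + 2)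
    rw [(hshift v).1] at h₂
    rw [(hshift v).2] at h₃
    linarith
  intro e he
  by_cases hT : e ∈ triangles
  · obtain ⟨v, -, rfl⟩ := mem_image.mp hT
    exact htri v
  · exact hf e he hT

lemma eq_xPrism_of_midpoint {y z : Sym2 (Fin 6) → ℝ} (hy : InSubtour 6 y) (hz : InSubtour 6 z)
    (hmid : ∀ e ∈ edgeSet 6, xPrism e = (y e + z e) / 2) : ∀ e ∈ edgeSet 6, y e = xPrism e := by
  have h := eq_zero_of_sum_cut_singleton_eq_zero (fun e => y e - xPrism e) ?_ ?_
  · intro e he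
    linarith [h e he]
  · intro e he hT
    have hw : weight e = 0 ∨ weight e = 2 := by
      unfold weight
      split_ifs <;> simp_all
    obtain ⟨hy₀, hy₁⟩ := hy.1 e he
    obtain ⟨hz₀, hz₁⟩ := hz.1 e he
    have hm := hmid e he
    rw [xPrism_eq_weight_div_two] at hm ⊢
    rcases hw with hw | hw <;> rw [hw] at hm ⊢ <;> norm_num at hm ⊢ <;> linarith
  · intro v
    rw [sum_sub_distrib, hy.2.1 v, inSubtour_xPrism.2.1 v, sub_self]

lemma isExtremePt_xPrism : IsExtremePt 6 xPrism := by
  refine ⟨inSubtour_xPrism, fun y z hy hz hmid e he => ?_⟩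
  have hmid' : ∀ e ∈ edgeSet 6, xPrism e = (z e + y e) / 2 := fun e he => by
    rw [hmid e he, add_comm]
  rw [eq_xPrism_of_midpoint hy hz hmid e he, eq_xPrism_of_midpoint hz hy hmid' e he]

lemma card_filter_matching_le {σ : Equiv.Perm (Fin 6)} (hσ : ∀ v, σ (σ v) ≠ v) :
    #{v | s(v, σ v) ∈ matching} ≤ 2 + #{v | s(v, σ v) ∈ nonEdges} := by
  have hcut : cut {0, 2, 4} = matching ∪ nonEdges := by decide
  have hdisj : Disjoint matching nonEdges := by decide
  have hparity := card_filter_mk_apply_mem_cut σ {0, 2, 4}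
  simp only [hcut, mem_union, filter_or] at hparity
  rw [card_union_of_disjoint (disjoint_filter_filter' _ _ fun _ hM hN v hv => by
    exact disjoint_left.mp hdisj (hM v hv) (hN v hv))] at hparity
  have hM : #{v | s(v, σ v) ∈ matching} ≤ #matching :=
    card_le_card_of_injOn _ (fun v hv => (mem_filter.mp hv).2)
      fun a _ b _ h => injective_mk_apply hσ h
  have hM3 : #matching = 3 := by decide
  omega

lemma sum_matching_le_of_isHamCycle {t : Sym2 (Fin 6) → ℝ} (ht : IsHamCycle 6 t) :
    ∑ e ∈ matching, t e ≤ 2 + ∑ e ∈ nonEdges, t e := by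
  obtain ⟨σ, hσ, ht⟩ := ht.exists_perm (by norm_num)
  have hM : matching ⊆ edgeSet 6 := by decide
  have hN : nonEdges ⊆ edgeSet 6 := by decide
  rw [sum_eq_card_filter_mk_apply hσ ht hM, sum_eq_card_filter_mk_apply hσ ht hN]
  exact_mod_cast card_filter_matching_le hσ

lemma not_exists_convex_combination_isHamCycle :
    ¬ ∃ (k : ℕ) (t : Fin k → Sym2 (Fin 6) → ℝ) (lam : Fin k → ℝ),
      (∀ i, IsHamCycle 6 (t i)) ∧
      (∀ i, ∀ e ∈ edgeSet 6, 0 < t i e → 0 < xPrism e) ∧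
      (∀ i, 0 ≤ lam i) ∧ (∑ i, lam i = 1) ∧
      (∀ e ∈ edgeSet 6, xPrism e = ∑ i, lam i * t i e) := by
  rintro ⟨k, t, lam, hham, hsupp, hlam₀, hlam₁, hx⟩
  have hM : matching ⊆ edgeSet 6 := by decide
  have hN : nonEdges ⊆ edgeSet 6 := by decide
  have hw : ∀ e ∈ nonEdges, weight e = 0 := by decide
  have hle : ∀ i, ∑ e ∈ matching, t i e ≤ 2 := fun i => by
    have hzero : ∀ e ∈ nonEdges, t i e ≤ 0 := fun e he => by
      have hxe : xPrism e = 0 := by simp [xPrism_eq_weight_div_two, hw e he]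
      by_contra! hpos
      exact (hsupp i e (hN he) hpos).ne' hxe
    linarith [sum_matching_le_of_isHamCycle (hham i), sum_nonpos hzero]
  have hxM : ∑ e ∈ matching, xPrism e = 3 := by
    rw [sum_xPrism]
    norm_num [show ∑ e ∈ matching, weight e = 6 by decide]
  have : ∑ e ∈ matching, xPrism e ≤ 2 :=
    calc ∑ e ∈ matching, xPrism e = ∑ i, lam i * ∑ e ∈ matching, t i e := by
          rw [sum_congr rfl fun e he => hx e (hM he), sum_comm]
          simp only [mul_sum]
      _ ≤ ∑ i, lam i * 2 := sum_le_sum fun i _ => mul_le_mul_of_nonneg_left (hle i) (hlam₀ i)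
      _ = 2 := by rw [← sum_mul, hlam₁, one_mul]
  linarith

lemma isMetricCost_metric : IsMetricCost 6 fun e => (metric e : ℝ) := by
  have htri : ∀ i j k : Fin 6, metric s(i, k) ≤ metric s(i, j) + metric s(j, k) := by decide
  exact ⟨fun e => Nat.cast_nonneg _, fun i j k => by dsimp only; exact_mod_cast htri i j k⟩

lemma cost_metric_xPrism : cost (fun e => (metric e : ℝ)) xPrism = 9 := by
  have h : ∑ e ∈ edgeSet 6, metric e * weight e = 18 := by decide
  simp only [cost, xPrism_eq_weight_div_two, mul_div_assoc', ← sum_div]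
  rw [show ∑ e ∈ edgeSet 6, (metric e : ℝ) * weight e = 18 by exact_mod_cast h]
  norm_num

lemma ten_le_cost_metric {t : Sym2 (Fin 6) → ℝ} (ht : IsHamCycle 6 t) :
    10 ≤ cost (fun e => (metric e : ℝ)) t := by
  obtain ⟨σ, hσ, ht⟩ := ht.exists_perm (by norm_num)
  have hedge : ∀ e : Sym2 (Fin 6), ¬ e.IsDiag →
      metric e + (if e ∈ matching then 1 else 0) = 2 + (if e ∈ nonEdges then 1 else 0) := by
    decide
  have hsum : ∑ v, metric s(v, σ v) + #{v | s(v, σ v) ∈ matching} =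
      12 + #{v | s(v, σ v) ∈ nonEdges} := by
    have := sum_congr rfl fun v (_ : v ∈ univ) =>
      hedge s(v, σ v) (Sym2.mk_isDiag_iff.not.mpr fun h => hσ v (by rw [← h, ← h]))
    simpa [sum_add_distrib, sum_boole] using this
  rw [cost_eq_sum_mk_apply hσ ht]
  have := card_filter_matching_le hσ
  exact_mod_cast (by omega : 10 ≤ ∑ v, metric s(v, σ v))

lemma isHamCycle_tour : IsHamCycle 6 (cycleIncidence tour) := by
  refine ⟨tour, List.isCycle_formPerm (by decide) (by norm_num), ?_, fun e _ => rfl⟩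
  rw [tour, List.support_formPerm_of_nodup _ (by decide) (by decide)]
  decide

lemma cost_metric_tour : cost (fun e => (metric e : ℝ)) (cycleIncidence tour) = 10 := by
  have hσ : ∀ v, tour (tour v) ≠ v := by decide
  have h : ∑ v, metric s(v, tour v) = 10 := by decide
  rw [cost_eq_sum_mk_apply hσ fun e _ => rfl]
  exact_mod_cast h

end Prism

/-- The prism point is a half-integral extreme point of `S^6`, is not a convex
combination of Hamiltonian cycle incidence vectors supported within its
support, and there is a metric whose optimal-tour-to-LP-value ratio at this
point equals 10/9. -/
theorem prism_extreme_point :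
    IsExtremePt 6 xPrism ∧
    (∀ e ∈ edgeSet 6, xPrism e = 0 ∨ xPrism e = 1 / 2 ∨ xPrism e = 1) ∧
    (¬ ∃ (k : ℕ) (t : Fin k → Sym2 (Fin 6) → ℝ) (lam : Fin k → ℝ),
      (∀ i, IsHamCycle 6 (t i)) ∧
      (∀ i, ∀ e ∈ edgeSet 6, 0 < t i e → 0 < xPrism e) ∧
      (∀ i, 0 ≤ lam i) ∧ (∑ i, lam i = 1) ∧
      (∀ e ∈ edgeSet 6, xPrism e = ∑ i, lam i * t i e)) ∧
    (∃ c : Sym2 (Fin 6) → ℝ, IsMetricCost 6 c ∧ 0 < cost c xPrism ∧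
      ∃ t : Sym2 (Fin 6) → ℝ, IsHamCycle 6 t ∧
        (∀ t' : Sym2 (Fin 6) → ℝ, IsHamCycle 6 t' → cost c t ≤ cost c t') ∧
        cost c t / cost c xPrism = 10 / 9) := by
  refine ⟨Prism.isExtremePt_xPrism, fun e _ => ?_, Prism.not_exists_convex_combination_isHamCycle,
    fun e => Prism.metric e, Prism.isMetricCost_metric, by rw [Prism.cost_metric_xPrism]; norm_num,
    cycleIncidence Prism.tour, Prism.isHamCycle_tour, fun t ht => ?_, ?_⟩
  · unfold xPrism
    split_ifs <;> norm_num
  · rw [Prism.cost_metric_tour]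
    exact Prism.ten_le_cost_metric ht
  · rw [Prism.cost_metric_tour, Prism.cost_metric_xPrism]
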